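/- Let R be a *-reducing ring with involution and let p, q ∈ R be projections. Then the following ten conditions are equivalent: (1) p + q - pq is MP invertible; (2) p + (1-p)q(1-p) is MP invertible; (3) (1-p)q(1-p) is MP invertible; (4) q - pq is MP invertible; (5) q - qp is MP invertible; (6) p + q - qp is MP invertible; (7) q + (1-q)p(1-q) is MP invertible; (8) (1-q)p(1-q) is MP invertible; (9) p - qp is MP invertible; (10) p - pq is MP invertible. -/
import Mathlib


/-- `b` is a Moore–Penrose inverse of `a`. -/
def IsMPInv {R : Type*} [Ring R] [StarRing R] (a b : R) : Prop :=
  a * b * a = a ∧ b * a * b = b ∧ star (a * b) = a * b ∧ star (b * a) = b * a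

/-- `a` is Moore–Penrose invertible. -/
def IsMPInvertible {R : Type*} [Ring R] [StarRing R] (a : R) : Prop :=
  ∃ b, IsMPInv a b

/-- A projection: a self-adjoint idempotent. -/
def IsProjection {R : Type*} [Ring R] [StarRing R] (p : R) : Prop :=
  p * p = p ∧ star p = p

/-- A `*`-reducing ring: `a* a = 0` implies `a = 0`. -/
def IsStarReducing (R : Type*) [Ring R] [StarRing R] : Prop :=
  ∀ a : R, star a * a = 0 → a = 0

set_option linter.unusedSectionVars false
set_option linter.unusedVariables false

section Helpers
variable {R : Type*} [Ring R] [StarRing R]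

lemma mp_star {a b : R} (h : IsMPInv a b) : IsMPInv (star a) (star b) := by
  obtain ⟨h1, h2, h3, h4⟩ := h
  refine ⟨?_, ?_, ?_, ?_⟩
  · calc star a * star b * star a = star (a * (b * a)) := by rw [star_mul, star_mul]
    _ = star a := by rw [← mul_assoc, h1]
  · calc star b * star a * star b = star (b * (a * b)) := by rw [star_mul, star_mul]
    _ = star b := by rw [← mul_assoc, h2]
  · rw [← star_mul, star_star, h4]
  · rw [← star_mul, star_star, h3]

lemma mp_unique {a b c : R} (hb : IsMPInv a b) (hc : IsMPInv a c) : b = c := by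
  obtain ⟨b1, b2, b3, b4⟩ := hb
  obtain ⟨c1, c2, c3, c4⟩ := hc
  have hab : a * b = a * c := by
    calc a * b = a * c * a * b := by rw [c1]
    _ = star (a*c) * star (a*b) := by rw [b3, c3]; noncomm_ring
    _ = star (a * b * (a * c)) := by rw [← star_mul]
    _ = star (a * c) := by rw [show a * b * (a*c) = a * b * a * c by noncomm_ring, b1]
    _ = a * c := c3
  have hba : b * a = c * a := by
    calc b * a = b * (a * c * a) := by rw [c1]
    _ = star (b*a) * star (c*a) := by rw [b4, c4]; noncomm_ring
    _ = star (c * a * (b * a)) := by rw [← star_mul]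
    _ = star (c * a) := by rw [show c * a * (b*a) = c * (a * b * a) by noncomm_ring, b1]
    _ = c * a := c4
  calc b = b * a * b := b2.symm
  _ = b * (a * c) := by rw [mul_assoc, ← hab]
  _ = (b * a) * c := by noncomm_ring
  _ = c * a * c := by rw [hba]
  _ = c := c2

lemma mp_sa {a b : R} (ha : star a = a) (h : IsMPInv a b) : star b = b ∧ b * a = a * b := by
  have hb' : IsMPInv a (star b) := by
    have := mp_star h
    rwa [ha] at this
  have hbb : star b = b := mp_unique hb' h
  refine ⟨hbb, ?_⟩
  calc b * a = star (b * a) := h.2.2.2.symm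
  _ = star a * star b := by rw [star_mul]
  _ = a * b := by rw [ha, hbb]

lemma mp_aas {a b : R} (h : IsMPInv a b) : a = a * star a * a * (b * star b) := by
  obtain ⟨h1, h2, h3, h4⟩ := h
  have e1 : a = a * star a * star b := by
    calc a = a * (b * a) := by rw [← mul_assoc, h1]
    _ = a * star (b * a) := by rw [h4]
    _ = a * (star a * star b) := by rw [star_mul]
    _ = a * star a * star b := by noncomm_ring
  have e2 : star b = a * b * star b := by
    calc star b = star (b * (a * b)) := by rw [← mul_assoc, h2]
    _ = star (a * b) * star b := by rw [star_mul]
    _ = a * b * star b := by rw [h3]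
  calc a = a * star a * star b := e1
  _ = a * star a * (a * b * star b) := by rw [← e2]
  _ = a * star a * a * (b * star b) := by noncomm_ring

lemma atomic {y r : R} (hy : star y = y) (h : y = y * y * r) : IsMPInvertible y := by
  have hA : y * y * r = y := h.symm
  have hry : y = star r * (y * y) := by
    calc y = star y := hy.symm
    _ = star (y * y * r) := by rw [← h]
    _ = star r * star (y * y) := by rw [star_mul]
    _ = star r * (y * y) := by rw [star_mul, hy]
  have hcomm : star r * y = y * r := by
    calc star r * y = star r * (y * y * r) := by rw [← h]
    _ = (star r * (y * y)) * r := by noncomm_ring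
    _ = y * r := by rw [← hry]
  have hyry : y * r * y = y := by
    calc y * r * y = star r * y * y := by rw [← hcomm]
    _ = star r * (y * y) := by noncomm_ring
    _ = y := hry.symm
  have hsw : star (y * r) = y * r := by
    calc star (y * r) = star r * star y := by rw [star_mul]
    _ = star r * y := by rw [hy]
    _ = y * r := hcomm
  have hsc : star (y * r * r) = y * r * r := by
    calc star (y * r * r) = star r * star (y * r) := by rw [star_mul]
    _ = star r * (y * r) := by rw [hsw]
    _ = (star r * y) * r := by noncomm_ring
    _ = (y * r) * r := by rw [hcomm]
  have hcy : y * r * r * y = y * r := by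
    calc y * r * r * y = star (star y * star (y * r * r)) := by rw [← star_mul, star_star]
    _ = star (y * (y * r * r)) := by rw [hy, hsc]
    _ = star (y * y * r * r) := by rw [show y * (y * r * r) = y * y * r * r by noncomm_ring]
    _ = star (y * r) := by rw [hA]
    _ = y * r := hsw
  refine ⟨y * r * (y * r * r), ?_, ?_, ?_, ?_⟩
  · simp only [← mul_assoc]
    simp only [hA, hyry, hcy]
  · simp only [← mul_assoc]
    simp only [hA, hyry, hcy]
  · simp only [← mul_assoc]
    simp only [hA, hyry, hcy]
    exact hsw
  · simp only [← mul_assoc]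
    simp only [hA, hyry, hcy]
    exact hsw
end Helpers

section Helpers2
variable {R : Type*} [Ring R] [StarRing R]

lemma aas_fwd {a : R} : IsMPInvertible a → IsMPInvertible (a * star a) := by
  rintro ⟨b, h1, h2, h3, h4⟩
  have e3 : star a * star b = b * a := by rw [← star_mul, h4]
  have e4 : star b * star a = a * b := by rw [← star_mul, h3]
  have hkc : a * star a * (star b * b) = a * b := by
    calc a * star a * (star b * b) = a * (star a * star b) * b := by noncomm_ring
    _ = a * (b * a) * b := by rw [e3]
    _ = a * b * (a * b) := by noncomm_ring
    _ = a * b * a * b := by noncomm_ring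
    _ = a * b := by rw [h1]
  have hck : star b * b * (a * star a) = a * b := by
    calc star b * b * (a * star a) = star b * (b * a) * star a := by noncomm_ring
    _ = star b * (star a * star b) * star a := by rw [e3]
    _ = (star b * star a) * (star b * star a) := by noncomm_ring
    _ = (a * b) * (a * b) := by rw [e4]
    _ = a * b * a * b := by noncomm_ring
    _ = a * b := by rw [h1]
  have habsb : a * b * star b = star b := by
    calc a * b * star b = star (a * b) * star b := by rw [h3]
    _ = star (b * (a * b)) := by rw [← star_mul]
    _ = star (b * a * b) := by rw [mul_assoc]
    _ = star b := by rw [h2]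
  refine ⟨star b * b, ?_, ?_, ?_, ?_⟩
  · calc a * star a * (star b * b) * (a * star a) = a * b * (a * star a) := by rw [hkc]
    _ = (a * b * a) * star a := by noncomm_ring
    _ = a * star a := by rw [h1]
  · calc star b * b * (a * star a) * (star b * b) = a * b * (star b * b) := by rw [hck]
    _ = (a * b * star b) * b := by noncomm_ring
    _ = star b * b := by rw [habsb]
  · rw [hkc, h3]
  · calc star (star b * b * (a * star a)) = star (a * b) := by rw [hck]
    _ = a * b := h3
    _ = star b * b * (a * star a) := hck.symm

lemma aas_bwd (hR : IsStarReducing R) {a : R} :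
    IsMPInvertible (a * star a) → IsMPInvertible a := by
  rintro ⟨d, hd⟩
  have hks : star (a * star a) = a * star a := by rw [star_mul, star_star]
  obtain ⟨hsd, hcomm⟩ := mp_sa hks hd
  obtain ⟨hkdk, hdkd, hskd, hsdk⟩ := hd
  -- hcomm : d * (a * star a) = (a * star a) * d
  have hskd' : star (a * star a * d) = a * star a * d := hskd
  have hz : a * star a * d * a = a := by
    have key : star (star a * (1 - a * star a * d)) * (star a * (1 - a * star a * d)) = 0 := by
      have h1 : star (star a * (1 - a * star a * d)) = (1 - a * star a * d) * a := by
        rw [star_mul, star_star, star_sub, star_one, hskd]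
      rw [h1]
      calc (1 - a * star a * d) * a * (star a * (1 - a * star a * d))
          = (1 - a * star a * d) * (a * star a) * (1 - a * star a * d) := by noncomm_ring
      _ = ((a * star a) - (a * star a * d * (a * star a))) * (1 - a * star a * d) := by noncomm_ring
      _ = ((a * star a) - (a * star a)) * (1 - a * star a * d) := by rw [hkdk]
      _ = 0 := by rw [sub_self, zero_mul]
    have hz0 := hR _ key
    have hz1 : (1 - a * star a * d) * a = 0 := by
      have := congrArg star hz0
      rwa [star_mul, star_star, star_sub, star_one, hskd, star_zero] at this
    have hz2 : a * star a * d * a - a = 0 := by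
      calc a * star a * d * a - a = -((1 - a * star a * d) * a) := by noncomm_ring
      _ = 0 := by rw [hz1, neg_zero]
    exact sub_eq_zero.mp hz2
  refine ⟨star a * d, ?_, ?_, ?_, ?_⟩
  · calc a * (star a * d) * a = a * star a * d * a := by noncomm_ring
    _ = a := hz
  · calc star a * d * a * (star a * d) = star a * (d * (a * star a) * d) := by noncomm_ring
    _ = star a * d := by rw [hdkd]
  · calc star (a * (star a * d)) = star (a * star a * d) := by rw [← mul_assoc]
    _ = a * star a * d := hskd
    _ = a * (star a * d) := by rw [mul_assoc]
  · simp only [star_mul, star_star, hsd, mul_assoc]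

end Helpers2

section Orth
variable {R : Type*} [Ring R] [StarRing R]

/-- (p + e) MP invertible → e MP invertible, for orthogonal p, e. -/
lemma S3 {p e : R} (hp : p * p = p) (hsp : star p = p) (hse : star e = e)
    (hpe : p * e = 0) (hep : e * p = 0) :
    IsMPInvertible (p + e) → IsMPInvertible e := by
  rintro ⟨b, hb⟩
  have hsa : star (p + e) = p + e := by rw [star_add, hsp, hse]
  have hx := mp_aas hb
  rw [hsa] at hx
  have heep : e * e * p = 0 := by rw [mul_assoc, hep, mul_zero]
  have hpee : p * e * e = 0 := by rw [hpe, zero_mul]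
  have hM : (p + e) * (p + e) * (p + e) = p + e * e * e := by
    simp only [mul_add, add_mul, ← mul_assoc, hp, hpe, hep, heep, hpee, zero_mul, mul_zero,
      add_zero, zero_add]
  rw [hM] at hx
  -- hx : p + e = (p + e*e*e) * (b * star b)
  have key : e = e * e * (e * (b * star b * (1 - p))) := by
    calc e = (1 - p) * (p + e) * (1 - p) := by
          simp only [mul_add, add_mul, sub_mul, mul_sub, mul_one, one_mul, ← mul_assoc,
            hp, hpe, hep, zero_mul, mul_zero, add_zero, zero_add, sub_zero]
          abel
    _ = (1 - p) * ((p + e * e * e) * (b * star b)) * (1 - p) := by rw [← hx]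
    _ = e * e * (e * (b * star b * (1 - p))) := by
          simp only [mul_add, add_mul, sub_mul, mul_sub, mul_one, one_mul, ← mul_assoc,
            hp, hpe, hpee, zero_mul, mul_zero, add_zero, zero_add, sub_zero]
          abel
  exact atomic hse key

/-- e MP invertible → (p + e) MP invertible, for orthogonal p, e. -/
lemma S4 {p e : R} (hp : p * p = p) (hsp : star p = p) (hse : star e = e)
    (hpe : p * e = 0) (hep : e * p = 0) :
    IsMPInvertible e → IsMPInvertible (p + e) := by
  rintro ⟨d, hd⟩
  obtain ⟨hsd, hcomm⟩ := mp_sa hse hd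
  obtain ⟨hede, hded, hsed, hsde⟩ := hd
  -- hcomm : d * e = e * d
  have hd1 : e * d * d = d := by
    calc e * d * d = d * e * d := by rw [← hcomm]
    _ = d := hded
  have hd2 : d * d * e = d := by
    calc d * d * e = d * (d * e) := by rw [mul_assoc]
    _ = d * (e * d) := by rw [hcomm]
    _ = d * e * d := by rw [mul_assoc]
    _ = d := hded
  have hpd : p * d = 0 := by
    calc p * d = p * (e * d * d) := by rw [hd1]
    _ = p * e * d * d := by noncomm_ring
    _ = 0 := by rw [hpe, zero_mul, zero_mul]
  have hdp : d * p = 0 := by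
    calc d * p = (d * d * e) * p := by rw [hd2]
    _ = d * d * (e * p) := by rw [mul_assoc]
    _ = 0 := by rw [hep, mul_zero]
  have hedp : e * d * p = 0 := by rw [mul_assoc, hdp, mul_zero]
  have hsg : star (p + e * d) = p + e * d := by
    rw [star_add, hsp, star_mul, hsd, hse, hcomm]
  refine ⟨p + d, ?_, ?_, ?_, ?_⟩
  · have h1 : (p + e) * (p + d) = p + e * d := by
      simp only [mul_add, add_mul, ← mul_assoc, hp, hpd, hep, zero_mul, mul_zero,
        add_zero, zero_add]
    rw [h1]
    simp only [mul_add, add_mul, ← mul_assoc, hp, hpe, hedp, hede, zero_mul, mul_zero,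
      add_zero, zero_add]
  · have h1 : (p + d) * (p + e) = p + e * d := by
      simp only [mul_add, add_mul, ← mul_assoc, hp, hpe, hdp, hcomm, zero_mul, mul_zero,
        add_zero, zero_add]
    rw [h1]
    simp only [mul_add, add_mul, ← mul_assoc, hp, hpd, hedp, hd1, zero_mul, mul_zero,
      add_zero, zero_add]
  · have h1 : (p + e) * (p + d) = p + e * d := by
      simp only [mul_add, add_mul, ← mul_assoc, hp, hpd, hep, zero_mul, mul_zero,
        add_zero, zero_add]
    rw [h1, hsg]
  · have h1 : (p + d) * (p + e) = p + e * d := by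
      simp only [mul_add, add_mul, ← mul_assoc, hp, hpe, hdp, hcomm, zero_mul, mul_zero,
        add_zero, zero_add]
    rw [h1, hsg]

end Orth

section Struct
variable {R : Type*} [Ring R] [StarRing R]

/-- key structural lemma: (p+v+e) MP invertible → e MP invertible. -/
lemma S1 {p v e : R} (hp : p * p = p) (hsp : star p = p) (hse : star e = e)
    (hpe : p * e = 0) (hep : e * p = 0) (hpv : p * v = 0) (hvp : v * p = v)
    (hve : v * e = 0) (hvv : v * v = 0) (hvsv : v * star v = e - e * e) :
    IsMPInvertible (p + v + e) → IsMPInvertible e := by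
  rintro ⟨b, hb⟩
  have hsvp : star v * p = 0 := by
    have := congrArg star hpv
    rwa [star_mul, hsp, star_zero] at this
  have hpsv : p * star v = star v := by
    have := congrArg star hvp
    rwa [star_mul, hsp] at this
  have hesv : e * star v = 0 := by
    have := congrArg star hve
    rwa [star_mul, hse, star_zero] at this
  have hsa : star (p + v + e) = p + star v + e := by
    rw [star_add, star_add, hsp, hse]
  have hx := mp_aas hb
  rw [hsa] at hx
  have hP1 : (p + v + e) * (p + star v + e) = p + v + star v + e := by
    simp only [mul_add, add_mul, ← mul_assoc, hp, hpe, hep, hpv, hvp, hve, hpsv, hsvp, hesv,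
      hvsv, zero_mul, mul_zero, add_zero, zero_add]
    abel
  have hP2 : (p + v + star v + e) * (p + v + e) =
      p + v + (star v * v + star v * e + e * v + e * e) := by
    simp only [mul_add, add_mul, ← mul_assoc, hp, hpe, hep, hpv, hvp, hve, hvv, hsvp, hesv,
      zero_mul, mul_zero, add_zero, zero_add]
    abel
  rw [show (p + v + e) * (p + star v + e) * (p + v + e) * (b * star b)
      = ((p + v + e) * (p + star v + e)) * (p + v + e) * (b * star b) from rfl, hP1, hP2] at hx
  -- hx : p + v + e = (p + v + (sv*v + sv*e + e*v + e*e)) * (b * star b)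
  set T : R := b * star b * (1 - p) with hT
  have hI : e = v * T + e * (v * T) + e * (e * T) := by
    calc e = (1 - p) * (p + v + e) * (1 - p) := by
          simp only [mul_add, add_mul, sub_mul, mul_sub, mul_one, one_mul, ← mul_assoc,
            hp, hpe, hep, hpv, hvp, zero_mul, mul_zero, add_zero, zero_add, sub_zero]
          abel
    _ = (1 - p) * ((p + v + (star v * v + star v * e + e * v + e * e)) * (b * star b)) * (1 - p) := by
          rw [← hx]
    _ = v * T + e * (v * T) + e * (e * T) := by
          rw [hT]
          simp only [mul_add, add_mul, sub_mul, mul_sub, mul_one, one_mul, ← mul_assoc,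
            hp, hpe, hpv, hpsv, hsvp, zero_mul, mul_zero, add_zero, zero_add, sub_zero]
          abel
  have hII : v * T + (e - e * e) * (v * T) + (e - e * e) * (e * T) = 0 := by
    have h0 : p * ((p + v + e) * (1 - p)) = 0 := by
      simp only [mul_add, add_mul, sub_mul, mul_sub, mul_one, one_mul, ← mul_assoc,
        hp, hpe, hpv, zero_mul, mul_zero, add_zero, zero_add, sub_zero]
      abel
    rw [hx] at h0
    calc v * T + (e - e * e) * (v * T) + (e - e * e) * (e * T)
        = v * (p * ((p + v + (star v * v + star v * e + e * v + e * e)) * (b * star b) * (1 - p))) := by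
          rw [hT]
          simp only [mul_add, add_mul, sub_mul, mul_sub, mul_one, one_mul, ← mul_assoc,
            hp, hpe, hpv, hvp, hpsv, hvsv, zero_mul, mul_zero, add_zero, zero_add, sub_zero]
          abel
    _ = 0 := by rw [h0, mul_zero]
  have key : e = e * e * ((v + e) * T) := by
    have h5 : v * T + e * (v * T) + e * (e * T) - e * e * ((v + e) * T)
        = v * T + (e - e * e) * (v * T) + (e - e * e) * (e * T) := by
      simp only [mul_add, add_mul, sub_mul, mul_sub, ← mul_assoc]
      abel
    calc e = v * T + e * (v * T) + e * (e * T) := hI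
    _ = e * e * ((v + e) * T) + (v * T + (e - e * e) * (v * T) + (e - e * e) * (e * T)) := by
          rw [← h5]; abel
    _ = e * e * ((v + e) * T) := by rw [hII, add_zero]
  exact atomic hse key

/-- key structural lemma: e MP invertible → (p+v+e) MP invertible (needs *-reducing). -/
lemma S2 (hR : IsStarReducing R) {p v e : R} (hp : p * p = p) (hsp : star p = p)
    (hse : star e = e)
    (hpe : p * e = 0) (hep : e * p = 0) (hpv : p * v = 0) (hvp : v * p = v)
    (hve : v * e = 0) (hvv : v * v = 0) (hvsv : v * star v = e - e * e) :
    IsMPInvertible e → IsMPInvertible (p + v + e) := by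
  rintro ⟨d, hd⟩
  obtain ⟨hsd, hcomm⟩ := mp_sa hse hd
  obtain ⟨hede, hded, hsed, hsde⟩ := hd
  have hd1 : e * d * d = d := by
    calc e * d * d = d * e * d := by rw [← hcomm]
    _ = d := hded
  have hd2 : d * d * e = d := by
    calc d * d * e = d * (d * e) := by rw [mul_assoc]
    _ = d * (e * d) := by rw [hcomm]
    _ = d * e * d := by rw [mul_assoc]
    _ = d := hded
  have hpd : p * d = 0 := by
    calc p * d = p * (e * d * d) := by rw [hd1]
    _ = p * e * d * d := by noncomm_ring
    _ = 0 := by rw [hpe, zero_mul, zero_mul]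
  have hdp : d * p = 0 := by
    calc d * p = (d * d * e) * p := by rw [hd2]
    _ = d * d * (e * p) := by rw [mul_assoc]
    _ = 0 := by rw [hep, mul_zero]
  have hvd : v * d = 0 := by
    calc v * d = v * (e * d * d) := by rw [hd1]
    _ = v * e * d * d := by noncomm_ring
    _ = 0 := by rw [hve, zero_mul, zero_mul]
  have hedp : e * d * p = 0 := by rw [mul_assoc, hdp, mul_zero]
  have hsg : star (e * d) = e * d := by rw [star_mul, hsd, hse, hcomm]
  have hedee : e * d * e * e = e * e := by rw [hede]
  -- the * -reducing step : e*d*v = v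
  have hgv : e * d * v = v := by
    have hw : (v - e * d * v) * star (v - e * d * v) = 0 := by
      have hs1 : star (v - e * d * v) = star v - star v * (e * d) := by
        rw [star_sub, star_mul, hsg]
      rw [hs1]
      have expand : (v - e * d * v) * (star v - star v * (e * d))
          = v * star v - v * star v * (e * d) - (e * d * (v * star v))
            + e * d * (v * star v) * (e * d) := by noncomm_ring
      rw [expand, hvsv]
      have h1 : e * d * (e - e * e) = e - e * e := by
        rw [mul_sub, ← mul_assoc, hede]
      rw [h1]
      abel
    have hz := hR (star (v - e * d * v)) (by rwa [star_star])
    have : v - e * d * v = 0 := by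
      have := congrArg star hz
      rwa [star_star, star_zero] at this
    calc e * d * v = v - (v - e * d * v) := by abel
    _ = v := by rw [this, sub_zero]
  have hedd : e * d * d = d := hd1
  have hab : (p + v + e) * (p + d - d * v) = p + e * d := by
    simp only [mul_add, add_mul, mul_sub, sub_mul, ← mul_assoc, hp, hpd, hpe, hvp, hvd, hep,
      hgv, zero_mul, mul_zero, add_zero, zero_add, sub_zero]
    abel
  have hba : (p + d - d * v) * (p + v + e) = p + e * d := by
    have hdvp : d * v * p = d * v := by rw [mul_assoc, hvp]
    have hdvv : d * v * v = 0 := by rw [mul_assoc, hvv, mul_zero]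
    have hdve : d * v * e = 0 := by rw [mul_assoc, hve, mul_zero]
    simp only [mul_add, add_mul, mul_sub, sub_mul, ← mul_assoc, hp, hpv, hpe, hdp, hcomm,
      hdvp, hdvv, hdve, zero_mul, mul_zero, add_zero, zero_add, sub_zero]
    abel
  refine ⟨p + d - d * v, ?_, ?_, ?_, ?_⟩
  · rw [hab]
    simp only [mul_add, add_mul, ← mul_assoc, hp, hpv, hpe, hedp, hgv, hede,
      zero_mul, mul_zero, add_zero, zero_add]
  · rw [show (p + d - d * v) * (p + v + e) * (p + d - d * v)
        = ((p + d - d * v) * (p + v + e)) * (p + d - d * v) by rw [mul_assoc, ← mul_assoc], hba]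
    have heddv : e * d * d * v = d * v := by rw [hd1]
    simp only [mul_add, add_mul, mul_sub, sub_mul, ← mul_assoc, hp, hpd, hedp, hedd, heddv,
      zero_mul, mul_zero, add_zero, zero_add, sub_zero]
  · rw [hab, star_add, hsp, hsg]
  · rw [hba, star_add, hsp, hsg]

end Struct

section Links
variable {R : Type*} [Ring R] [StarRing R]

lemma mpinv_star {a : R} : IsMPInvertible a → IsMPInvertible (star a) :=
  fun ⟨b, h⟩ => ⟨star b, mp_star h⟩

section pq
variable (p q : R) (hp : IsProjection p) (hq : IsProjection q)

include hp hq

private lemma rel_pv : p * ((1 - p) * (q * p)) = 0 := by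
  have hp2 : ∀ t : R, t * p * p = t * p := fun t => by rw [mul_assoc, hp.1]
  simp only [mul_sub, sub_mul, mul_add, add_mul, mul_one, one_mul, ← mul_assoc, hp.1, hq.1,
    hp2, zero_mul, mul_zero, add_zero, zero_add, sub_zero]
  abel

private lemma rel_vp : ((1 - p) * (q * p)) * p = (1 - p) * (q * p) := by
  have hp2 : ∀ t : R, t * p * p = t * p := fun t => by rw [mul_assoc, hp.1]
  simp only [mul_sub, sub_mul, mul_add, add_mul, mul_one, one_mul, ← mul_assoc, hp.1, hq.1,
    hp2, zero_mul, mul_zero, add_zero, zero_add, sub_zero]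

private lemma rel_pe : p * ((1 - p) * q * (1 - p)) = 0 := by
  have hp2 : ∀ t : R, t * p * p = t * p := fun t => by rw [mul_assoc, hp.1]
  simp only [mul_sub, sub_mul, mul_add, add_mul, mul_one, one_mul, ← mul_assoc, hp.1, hq.1,
    hp2, zero_mul, mul_zero, add_zero, zero_add, sub_zero]
  abel

private lemma rel_ep : ((1 - p) * q * (1 - p)) * p = 0 := by
  have hp2 : ∀ t : R, t * p * p = t * p := fun t => by rw [mul_assoc, hp.1]
  simp only [mul_sub, sub_mul, mul_add, add_mul, mul_one, one_mul, ← mul_assoc, hp.1, hq.1,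
    hp2, zero_mul, mul_zero, add_zero, zero_add, sub_zero]
  abel

private lemma rel_ve : ((1 - p) * (q * p)) * ((1 - p) * q * (1 - p)) = 0 := by
  have hp2 : ∀ t : R, t * p * p = t * p := fun t => by rw [mul_assoc, hp.1]
  have hq2 : ∀ t : R, t * q * q = t * q := fun t => by rw [mul_assoc, hq.1]
  simp only [mul_sub, sub_mul, mul_add, add_mul, mul_one, one_mul, ← mul_assoc, hp.1, hq.1,
    hp2, hq2, zero_mul, mul_zero, add_zero, zero_add, sub_zero]
  abel

private lemma rel_vv : ((1 - p) * (q * p)) * ((1 - p) * (q * p)) = 0 := by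
  have hp2 : ∀ t : R, t * p * p = t * p := fun t => by rw [mul_assoc, hp.1]
  have hq2 : ∀ t : R, t * q * q = t * q := fun t => by rw [mul_assoc, hq.1]
  simp only [mul_sub, sub_mul, mul_add, add_mul, mul_one, one_mul, ← mul_assoc, hp.1, hq.1,
    hp2, hq2, zero_mul, mul_zero, add_zero, zero_add, sub_zero]
  abel

private lemma rel_se : star ((1 - p) * q * (1 - p)) = (1 - p) * q * (1 - p) := by
  simp only [star_mul, star_sub, star_one, hp.2, hq.2, mul_assoc]

private lemma rel_sv : star ((1 - p) * (q * p)) = p * q * (1 - p) := by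
  simp only [star_mul, star_sub, star_one, hp.2, hq.2, mul_assoc]

private lemma rel_vsv : ((1 - p) * (q * p)) * star ((1 - p) * (q * p))
    = (1 - p) * q * (1 - p) - ((1 - p) * q * (1 - p)) * ((1 - p) * q * (1 - p)) := by
  rw [rel_sv p q hp hq]
  have hp2 : ∀ t : R, t * p * p = t * p := fun t => by rw [mul_assoc, hp.1]
  have hq2 : ∀ t : R, t * q * q = t * q := fun t => by rw [mul_assoc, hq.1]
  simp only [mul_sub, sub_mul, mul_add, add_mul, mul_one, one_mul, ← mul_assoc, hp.1, hq.1,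
    hp2, hq2, zero_mul, mul_zero, add_zero, zero_add, sub_zero]
  abel

private lemma rel_sum : p + (1 - p) * (q * p) + (1 - p) * q * (1 - p) = p + q - p * q := by
  noncomm_ring

private lemma rel_aas : (q - p * q) * star (q - p * q) = (1 - p) * q * (1 - p) := by
  have hs : star (q - p * q) = q - q * p := by
    simp only [star_sub, star_mul, hp.2, hq.2]
  rw [hs]
  have hp2 : ∀ t : R, t * p * p = t * p := fun t => by rw [mul_assoc, hp.1]
  have hq2 : ∀ t : R, t * q * q = t * q := fun t => by rw [mul_assoc, hq.1]
  simp only [mul_sub, sub_mul, mul_add, add_mul, mul_one, one_mul, ← mul_assoc, hp.1, hq.1,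
    hp2, hq2, zero_mul, mul_zero, add_zero, zero_add, sub_zero]

private lemma link13 (hR : IsStarReducing R) :
    IsMPInvertible (p + q - p * q) → IsMPInvertible ((1 - p) * q * (1 - p)) := by
  intro h
  rw [← rel_sum p q hp hq] at h
  exact S1 hp.1 hp.2 (rel_se p q hp hq) (rel_pe p q hp hq) (rel_ep p q hp hq)
    (rel_pv p q hp hq) (rel_vp p q hp hq) (rel_ve p q hp hq) (rel_vv p q hp hq)
    (rel_vsv p q hp hq) h

private lemma link31 (hR : IsStarReducing R) :
    IsMPInvertible ((1 - p) * q * (1 - p)) → IsMPInvertible (p + q - p * q) := by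
  intro h
  rw [← rel_sum p q hp hq]
  exact S2 hR hp.1 hp.2 (rel_se p q hp hq) (rel_pe p q hp hq) (rel_ep p q hp hq)
    (rel_pv p q hp hq) (rel_vp p q hp hq) (rel_ve p q hp hq) (rel_vv p q hp hq)
    (rel_vsv p q hp hq) h

private lemma link23 :
    IsMPInvertible (p + (1 - p) * q * (1 - p)) → IsMPInvertible ((1 - p) * q * (1 - p)) :=
  fun h => S3 hp.1 hp.2 (rel_se p q hp hq) (rel_pe p q hp hq) (rel_ep p q hp hq) h

private lemma link32 :
    IsMPInvertible ((1 - p) * q * (1 - p)) → IsMPInvertible (p + (1 - p) * q * (1 - p)) :=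
  fun h => S4 hp.1 hp.2 (rel_se p q hp hq) (rel_pe p q hp hq) (rel_ep p q hp hq) h

private lemma link43 :
    IsMPInvertible (q - p * q) → IsMPInvertible ((1 - p) * q * (1 - p)) := by
  intro h
  rw [← rel_aas p q hp hq]
  exact aas_fwd h

private lemma link34 (hR : IsStarReducing R) :
    IsMPInvertible ((1 - p) * q * (1 - p)) → IsMPInvertible (q - p * q) := by
  intro h
  rw [← rel_aas p q hp hq] at h
  exact aas_bwd hR h

private lemma link45 :
    IsMPInvertible (q - p * q) → IsMPInvertible (q - q * p) := by
  intro h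
  have := mpinv_star h
  rwa [star_sub, star_mul, hp.2, hq.2] at this

private lemma link54 :
    IsMPInvertible (q - q * p) → IsMPInvertible (q - p * q) := by
  intro h
  have := mpinv_star h
  rwa [star_sub, star_mul, hp.2, hq.2] at this

private lemma link16 :
    IsMPInvertible (p + q - p * q) → IsMPInvertible (p + q - q * p) := by
  intro h
  have := mpinv_star h
  rwa [star_sub, star_add, star_mul, hp.2, hq.2] at this

private lemma link61 :
    IsMPInvertible (p + q - q * p) → IsMPInvertible (p + q - p * q) := by
  intro h
  have := mpinv_star h
  rwa [star_sub, star_add, star_mul, hp.2, hq.2] at this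

end pq
end Links

theorem stmt_7 {R : Type*} [Ring R] [StarRing R] (hR : IsStarReducing R) (p q : R)
    (hp : IsProjection p) (hq : IsProjection q) :
    List.TFAE
      [IsMPInvertible (p + q - p * q),
       IsMPInvertible (p + (1 - p) * q * (1 - p)),
       IsMPInvertible ((1 - p) * q * (1 - p)),
       IsMPInvertible (q - p * q),
       IsMPInvertible (q - q * p),
       IsMPInvertible (p + q - q * p),
       IsMPInvertible (q + (1 - q) * p * (1 - q)),
       IsMPInvertible ((1 - q) * p * (1 - q)),
       IsMPInvertible (p - q * p),
       IsMPInvertible (p - p * q)] := by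
  tfae_have 1 → 3 := link13 p q hp hq hR
  tfae_have 3 → 1 := link31 p q hp hq hR
  tfae_have 2 → 3 := link23 p q hp hq
  tfae_have 3 → 2 := link32 p q hp hq
  tfae_have 3 → 4 := link34 p q hp hq hR
  tfae_have 4 → 3 := link43 p q hp hq
  tfae_have 4 → 5 := link45 p q hp hq
  tfae_have 5 → 4 := link54 p q hp hq
  tfae_have 1 → 6 := link16 p q hp hq
  tfae_have 6 → 1 := link61 p q hp hq
  tfae_have 6 → 8 := by
    intro h
    exact link13 q p hq hp hR (by rw [show q + p - q * p = p + q - q * p by abel]; exact h)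
  tfae_have 8 → 6 := by
    intro h
    have := link31 q p hq hp hR h
    rwa [show q + p - q * p = p + q - q * p by abel] at this
  tfae_have 7 → 8 := link23 q p hq hp
  tfae_have 8 → 7 := link32 q p hq hp
  tfae_have 8 → 9 := link34 q p hq hp hR
  tfae_have 9 → 8 := link43 q p hq hp
  tfae_have 9 → 10 := link45 q p hq hp
  tfae_have 10 → 9 := link54 q p hq hp
  tfae_finish
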